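/- With μ defined as in the context and δ₂ ≥ 2, for all i ∈ [δ₂] and all (y,z) ∈ ℕ^{δ₁} × ℕ^{δ₂} with z_{δ₂} = 0: μ^{(i)}_{(y, z + (δ₂+1)·e_{δ₂})} = μ^{(i)}_{(y, z + e_{δ₂−1})}, where e_k denotes the k-th standard unit vector of ℕ^{δ₂}. -/
import Mathlib


open scoped Classical

def Pred (δ₂ : ℕ) (zz : Fin δ₂ → ℕ) (f : Fin δ₂) (w : Fin δ₂ → ℕ) : Prop :=
  (∀ k, k < f → w k = zz k) ∧ w f < zz f ∧ ∀ l, f < l → w l ≤ δ₂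

noncomputable def Tsum (δ₂ : ℕ) (g : (Fin δ₂ → ℕ) → ℤ) (zz : Fin δ₂ → ℕ) (f : Fin δ₂) : ℤ :=
  ∑ᶠ (w : Fin δ₂ → ℕ) (_ : Pred δ₂ zz f w), g w

theorem aux_sum (δ₂ : ℕ) (hδ₂ : 2 ≤ δ₂) (g : (Fin δ₂ → ℕ) → ℤ)
    (hsupp : (Function.support g).Finite) (z z₁ z₂ : Fin δ₂ → ℕ)
    (h1 : ∀ m : Fin δ₂, m.1 ≠ δ₂ - 1 → z₁ m = z m)
    (h2 : z₁ ⟨δ₂ - 1, by omega⟩ = δ₂ + 1)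
    (h3 : ∀ m : Fin δ₂, m.1 ≠ δ₂ - 2 → z₂ m = z m)
    (h4 : z₂ ⟨δ₂ - 2, by omega⟩ = z ⟨δ₂ - 2, by omega⟩ + 1)
    (h5 : z ⟨δ₂ - 1, by omega⟩ = 0) :
    ∑ f : Fin δ₂, Tsum δ₂ g z₁ f = ∑ f : Fin δ₂, Tsum δ₂ g z₂ f := by
  have hj2 : δ₂ - 1 < δ₂ := by omega
  have hk2 : δ₂ - 2 < δ₂ := by omega
  let j : Fin δ₂ := ⟨δ₂ - 1, hj2⟩
  let k : Fin δ₂ := ⟨δ₂ - 2, hk2⟩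
  have hkj : k < j := by simp only [j, k, Fin.lt_def]; omega
  have hkjne : k ≠ j := ne_of_lt hkj
  have h2' : z₁ j = δ₂ + 1 := h2
  have h4' : z₂ k = z k + 1 := h4
  have h5' : z j = 0 := h5
  have hcompl : ∀ f : Fin δ₂, f ∉ ({k, j} : Finset (Fin δ₂)) → Tsum δ₂ g z₁ f = Tsum δ₂ g z₂ f := by
    intro f hf
    simp only [Finset.mem_insert, Finset.mem_singleton] at hf
    push_neg at hf
    have hf1 : f.1 < δ₂ - 2 := by
      have h2f := f.2
      have hne1 : f.1 ≠ δ₂ - 2 := fun h => hf.1 (Fin.ext h)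
      have hne2 : f.1 ≠ δ₂ - 1 := fun h => hf.2 (Fin.ext h)
      omega
    have e : ∀ m : Fin δ₂, m.1 ≤ f.1 → z₁ m = z₂ m := by
      intro m hm
      rw [h1 m (by omega), h3 m (by omega)]
    have hPe : ∀ w, Pred δ₂ z₁ f w = Pred δ₂ z₂ f w := by
      intro w
      apply propext
      unfold Pred
      constructor
      · rintro ⟨a, b, c⟩
        exact ⟨fun m hm => by rw [a m hm, e m (le_of_lt hm)],
          by rw [← e f le_rfl]; exact b, c⟩
      · rintro ⟨a, b, c⟩
        exact ⟨fun m hm => by rw [a m hm, ← e m (le_of_lt hm)],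
          by rw [e f le_rfl]; exact b, c⟩
    unfold Tsum
    exact finsum_congr fun w => by rw [hPe w]
  have hunion : {w | Pred δ₂ z₁ k w} ∪ {w | Pred δ₂ z₁ j w} = {w | Pred δ₂ z₂ k w} := by
    ext w
    simp only [Set.mem_union, Set.mem_setOf_eq]
    unfold Pred
    constructor
    · rintro (⟨a, b, c⟩ | ⟨a, b, c⟩)
      · refine ⟨fun m hm => ?_, ?_, c⟩
        · have hm2 : m.1 < δ₂ - 2 := hm
          rw [a m hm, h1 m (by omega), h3 m (by omega)]
        · rw [h4']
          rw [h1 k (by show δ₂ - 2 ≠ δ₂ - 1; omega)] at b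
          omega
      · refine ⟨fun m hm => ?_, ?_, fun l hl => ?_⟩
        · have hm2 : m.1 < δ₂ - 2 := hm
          have hmj : m < j := by simp only [j, Fin.lt_def]; omega
          rw [a m hmj, h1 m (by omega), h3 m (by omega)]
        · rw [h4', a k hkj, h1 k (by show δ₂ - 2 ≠ δ₂ - 1; omega)]
          omega
        · have hlj : l = j := by
            apply Fin.ext
            have hl1 : δ₂ - 2 < l.1 := hl
            have hl2 := l.2
            show l.1 = δ₂ - 1
            omega
          subst hlj
          rw [h2'] at b
          omega
    · rintro ⟨a, b, c⟩
      rw [h4'] at b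
      by_cases hc : w k < z k
      · left
        refine ⟨fun m hm => ?_, ?_, c⟩
        · have hm2 : m.1 < δ₂ - 2 := hm
          rw [a m hm, h3 m (by omega), h1 m (by omega)]
        · rw [h1 k (by show δ₂ - 2 ≠ δ₂ - 1; omega)]
          exact hc
      · right
        have hwk : w k = z k := by omega
        refine ⟨fun m hm => ?_, ?_, fun l hl => ?_⟩
        · have hm2 : m.1 < δ₂ - 1 := hm
          by_cases hmk : m = k
          · rw [hmk, hwk, h1 k (by show δ₂ - 2 ≠ δ₂ - 1; omega)]
          · have hmk2 : m.1 < δ₂ - 2 := by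
              have : m.1 ≠ δ₂ - 2 := fun h => hmk (Fin.ext h)
              omega
            have hmklt : m < k := by simp only [k, Fin.lt_def]; omega
            rw [a m hmklt, h3 m (by omega), h1 m (by omega)]
        · rw [h2']
          have := c j hkj
          omega
        · exact absurd hl (by have := l.2; simp only [j, Fin.lt_def]; omega)
  have hdisj : Disjoint {w | Pred δ₂ z₁ k w} {w | Pred δ₂ z₁ j w} := by
    rw [Set.disjoint_left]
    rintro w ⟨a, b, c⟩ ⟨a', b', c'⟩
    have := a' k hkj
    omega
  have hTj2 : Tsum δ₂ g z₂ j = 0 := by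
    have hPempty : ∀ w, Pred δ₂ z₂ j w = False := by
      intro w
      apply propext
      simp only [iff_false]
      rintro ⟨a, b, c⟩
      rw [h3 j (by show δ₂ - 1 ≠ δ₂ - 2; omega), h5'] at b
      omega
    unfold Tsum
    simp only [hPempty]
    simp
  have hkey : Tsum δ₂ g z₁ k + Tsum δ₂ g z₁ j = Tsum δ₂ g z₂ k := by
    have hAB := finsum_mem_union' (f := g) hdisj
      (hsupp.inter_of_right _) (hsupp.inter_of_right _)
    rw [hunion] at hAB
    exact hAB.symm
  have hdiff : ∀ f ∈ (Finset.univ : Finset (Fin δ₂)), f ∉ ({k, j} : Finset (Fin δ₂)) →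
      Tsum δ₂ g z₁ f - Tsum δ₂ g z₂ f = 0 :=
    fun f _ hf => sub_eq_zero.mpr (hcompl f hf)
  have hmain : ∑ f ∈ ({k, j} : Finset (Fin δ₂)), (Tsum δ₂ g z₁ f - Tsum δ₂ g z₂ f)
      = ∑ f : Fin δ₂, (Tsum δ₂ g z₁ f - Tsum δ₂ g z₂ f) :=
    Finset.sum_subset (Finset.subset_univ _) (fun f h1 h2 => hdiff f h1 h2)
  rw [Finset.sum_pair hkjne] at hmain
  rw [Finset.sum_sub_distrib] at hmain
  have : Tsum δ₂ g z₁ k - Tsum δ₂ g z₂ k + (Tsum δ₂ g z₁ j - Tsum δ₂ g z₂ j)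
      = Tsum δ₂ g z₁ k + Tsum δ₂ g z₁ j - (Tsum δ₂ g z₂ k + Tsum δ₂ g z₂ j) := by ring
  rw [this, hkey, hTj2, add_zero, sub_self] at hmain
  omega


/-- `lam δ₁ δ₂ a γ i y z` is the quantity `λ^{(i)}_{(y,z)}` of the paper:
`a_i` minus the total `γ`-weight (with coordinate-`i` multiplicities) of all
pairs `(ŷ, ẑ)` that precede `(y, z)` in the construction order. -/
noncomputable def lam (δ₁ δ₂ : ℕ) (a : Fin δ₁ → ℤ)
    (γ : ((Fin δ₁ → ℕ) × (Fin δ₂ → ℕ)) →₀ ℤ)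
    (i : Fin δ₁) (y : Fin δ₁ → ℕ) (z : Fin δ₂ → ℕ) : ℤ :=
  a i
  - ∑ᶠ zh : Fin δ₂ → ℕ,
      ∑ f : Fin δ₁,
        ∑ᶠ (u : Fin δ₁ → ℕ)
          (_ : (∀ k, k < f → u k = y k) ∧ u f < y f ∧ ∀ l, f < l → u l ≤ δ₁),
          (u i : ℤ) * γ (u, zh)
  - ∑ f : Fin δ₂,
      ∑ᶠ (w : Fin δ₂ → ℕ)
        (_ : (∀ k, k < f → w k = z k) ∧ w f < z f ∧ ∀ l, f < l → w l ≤ δ₂),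
        (y i : ℤ) * γ (y, w)

/-- `mu δ₁ δ₂ b γ i y z` is the quantity `μ^{(i)}_{(y,z)}` of the paper. -/
noncomputable def mu (δ₁ δ₂ : ℕ) (b : Fin δ₂ → ℤ)
    (γ : ((Fin δ₁ → ℕ) × (Fin δ₂ → ℕ)) →₀ ℤ)
    (i : Fin δ₂) (y : Fin δ₁ → ℕ) (z : Fin δ₂ → ℕ) : ℤ :=
  b i
  - ∑ᶠ zh : Fin δ₂ → ℕ,
      ∑ f : Fin δ₁,
        ∑ᶠ (u : Fin δ₁ → ℕ)
          (_ : (∀ k, k < f → u k = y k) ∧ u f < y f ∧ ∀ l, f < l → u l ≤ δ₁),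
          (zh i : ℤ) * γ (u, zh)
  - ∑ f : Fin δ₂,
      ∑ᶠ (w : Fin δ₂ → ℕ)
        (_ : (∀ k, k < f → w k = z k) ∧ w f < z f ∧ ∀ l, f < l → w l ≤ δ₂),
        (w i : ℤ) * γ (y, w)

theorem claim_mu_carry (δ₁ δ₂ : ℕ) (hδ₁ : 1 ≤ δ₁) (hδ₂ : 2 ≤ δ₂)
    (b : Fin δ₂ → ℤ) (γ : ((Fin δ₁ → ℕ) × (Fin δ₂ → ℕ)) →₀ ℤ)
    (i : Fin δ₂) (y : Fin δ₁ → ℕ) (z : Fin δ₂ → ℕ)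
    (hz : z ⟨δ₂ - 1, by omega⟩ = 0) :
    mu δ₁ δ₂ b γ i y (z + fun k => if k.1 = δ₂ - 1 then δ₂ + 1 else 0) =
      mu δ₁ δ₂ b γ i y (z + fun k => if k.1 = δ₂ - 2 then 1 else 0) := by
  unfold mu
  have hsupp : (Function.support (fun w : Fin δ₂ → ℕ => (w i : ℤ) * γ (y, w))).Finite := by
    apply Set.Finite.subset (γ.support.finite_toSet.image Prod.snd)
    intro w hw
    simp only [Function.mem_support] at hw
    have hne : γ (y, w) ≠ 0 := fun h => hw (by simp [h])
    exact ⟨(y, w), Finsupp.mem_support_iff.mpr hne, rfl⟩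
  congr 1
  refine aux_sum δ₂ hδ₂ (fun w : Fin δ₂ → ℕ => (w i : ℤ) * γ (y, w)) hsupp z
    (z + fun m => if m.1 = δ₂ - 1 then δ₂ + 1 else 0)
    (z + fun m => if m.1 = δ₂ - 2 then 1 else 0) ?_ ?_ ?_ ?_ ?_
  · intro m hm
    show z m + (if m.1 = δ₂ - 1 then δ₂ + 1 else 0) = z m
    rw [if_neg hm, add_zero]
  · show z ⟨δ₂ - 1, by omega⟩ + (if δ₂ - 1 = δ₂ - 1 then δ₂ + 1 else 0) = δ₂ + 1
    rw [if_pos rfl, show z ⟨δ₂ - 1, by omega⟩ = 0 from hz, zero_add]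
  · intro m hm
    show z m + (if m.1 = δ₂ - 2 then 1 else 0) = z m
    rw [if_neg hm, add_zero]
  · show z ⟨δ₂ - 2, by omega⟩ + (if δ₂ - 2 = δ₂ - 2 then 1 else 0) = z ⟨δ₂ - 2, by omega⟩ + 1
    rw [if_pos rfl]
  · exact hz
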